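/- arXiv:1302.0315 — 6 statements merged into one kernel-verified Lean document; each statement's English description precedes it below -/
import Mathlib

section
/- Suppose α* = (α*_1,…,α*_m) minimizes L among all tuples supported on some set S ⊆ {1,…,m}, and its residual g = g(α*) satisfies gᵀK_j g ≤ N²λ² for every j ∈ {1,…,m} (i.e. every functional gradient norm ‖∇_j E_N‖ = √(gᵀK_j g)/N is at most λ). Then α* is a global minimizer of L over all tuples α. (This is the early-exit clause of Theorem 1: if the algorithm exits because max_j ‖∇_j E_N(f^{k-1})‖ ≤ λ, then L(f) = L(f*).) -/
open Matrix Finset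

private lemma mkl_dot_sum {n m : ℕ} (v : Fin n → ℝ) (w : Fin m → Fin n → ℝ) :
    v ⬝ᵥ (∑ j, w j) = ∑ j, v ⬝ᵥ w j := by
  simp [dotProduct, Finset.mul_sum, Finset.sum_apply]
  rw [Finset.sum_comm]

private lemma mkl_cs {n : ℕ} (M : Matrix (Fin n) (Fin n) ℝ) (h : M.PosSemidef)
    (g v : Fin n → ℝ) :
    (g ⬝ᵥ (M *ᵥ v))^2 ≤ (g ⬝ᵥ (M *ᵥ g)) * (v ⬝ᵥ (M *ᵥ v)) := by
  have hsym : ∀ x y : Fin n → ℝ, x ⬝ᵥ (M *ᵥ y) = y ⬝ᵥ (M *ᵥ x) := by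
    intro x y
    have h1 : Mᵀ = M := by
      have := h.1
      simpa [Matrix.IsHermitian, Matrix.conjTranspose_eq_transpose_of_trivial] using this
    rw [dotProduct_mulVec, ← mulVec_transpose, h1, dotProduct_comm]
  have key : ∀ t : ℝ, 0 ≤ (v ⬝ᵥ (M *ᵥ v)) * (t * t) + (2 * (g ⬝ᵥ (M *ᵥ v))) * t + (g ⬝ᵥ (M *ᵥ g)) := by
    intro t
    have h0 := h.dotProduct_mulVec_nonneg (g + t • v)
    have heq : star (g + t • v) ⬝ᵥ (M *ᵥ (g + t • v)) =
        (v ⬝ᵥ (M *ᵥ v)) * (t * t) + (2 * (g ⬝ᵥ (M *ᵥ v))) * t + (g ⬝ᵥ (M *ᵥ g)) := by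
      have hst : star (g + t • v) = g + t • v := by simp
      rw [hst, mulVec_add, mulVec_smul, dotProduct_add, add_dotProduct, add_dotProduct,
        smul_dotProduct, dotProduct_smul, smul_dotProduct, dotProduct_smul, hsym v g]
      simp [smul_eq_mul]
      ring
    rw [heq] at h0
    simpa using h0
  have hd := discrim_le_zero key
  simp only [discrim] at hd
  nlinarith [hd]

/-- Early-exit clause of Theorem 1: if the minimizer of the ℓ1-regularized MKL
objective `L` over tuples supported on `S` has all functional gradient norms at
most `λ` (i.e. `gᵀ K_j g ≤ N² λ²` for all `j`), then it is a global minimizer. -/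
theorem stmt_0 (N m : ℕ) (hN : 1 ≤ N) (hm : 1 ≤ m)
    (y : Fin N → ℝ) (lam : ℝ) (hlam : 0 < lam)
    (K : Fin m → Matrix (Fin N) (Fin N) ℝ)
    (hPSD : ∀ j, (K j).PosSemidef)
    (hdiag : ∀ j i, K j i i ≤ 1)
    (L : (Fin m → Fin N → ℝ) → ℝ)
    (hL : ∀ α : Fin m → Fin N → ℝ, L α =
      lam * ∑ j, Real.sqrt (α j ⬝ᵥ (K j *ᵥ α j)) +
      (1 / (2 * N)) * ((∑ j, K j *ᵥ α j - y) ⬝ᵥ (∑ j, K j *ᵥ α j - y)))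
    (S : Finset (Fin m)) (αstar : Fin m → Fin N → ℝ)
    (hsupp : ∀ j ∉ S, αstar j = 0)
    (hmin : ∀ β : Fin m → Fin N → ℝ, (∀ j ∉ S, β j = 0) → L αstar ≤ L β)
    (g : Fin N → ℝ) (hg : g = ∑ j, K j *ᵥ αstar j - y)
    (hgrad : ∀ j, g ⬝ᵥ (K j *ᵥ g) ≤ (N : ℝ)^2 * lam^2) :
    ∀ β : Fin m → Fin N → ℝ, L αstar ≤ L β := by
  have hNpos : (0:ℝ) < N := by exact_mod_cast hN
  have hnonneg : ∀ j (v : Fin N → ℝ), 0 ≤ v ⬝ᵥ (K j *ᵥ v) := by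
    intro j v
    have := (hPSD j).dotProduct_mulVec_nonneg v
    simpa using this
  -- Lower bound: for every j and v,  0 ≤ lam·√(vKv) + (1/N)·(g ⬝ Kv)
  have lower : ∀ j (v : Fin N → ℝ),
      0 ≤ lam * Real.sqrt (v ⬝ᵥ (K j *ᵥ v)) + (1/(N:ℝ)) * (g ⬝ᵥ (K j *ᵥ v)) := by
    intro j v
    have hcs := mkl_cs (K j) (hPSD j) g v
    have hvv := hnonneg j v
    have hb : (0:ℝ) ≤ (N:ℝ) * lam * Real.sqrt (v ⬝ᵥ (K j *ᵥ v)) := by positivity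
    have hsq : ((N:ℝ) * lam * Real.sqrt (v ⬝ᵥ (K j *ᵥ v)))^2
        = (N:ℝ)^2 * lam^2 * (v ⬝ᵥ (K j *ᵥ v)) := by
      rw [mul_pow, mul_pow, Real.sq_sqrt hvv]
    have h1 : (g ⬝ᵥ (K j *ᵥ v))^2 ≤ ((N:ℝ) * lam * Real.sqrt (v ⬝ᵥ (K j *ᵥ v)))^2 := by
      rw [hsq]
      calc (g ⬝ᵥ (K j *ᵥ v))^2 ≤ (g ⬝ᵥ (K j *ᵥ g)) * (v ⬝ᵥ (K j *ᵥ v)) := hcs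
        _ ≤ (N:ℝ)^2 * lam^2 * (v ⬝ᵥ (K j *ᵥ v)) :=
          mul_le_mul_of_nonneg_right (hgrad j) hvv
    have h2 : -((N:ℝ) * lam * Real.sqrt (v ⬝ᵥ (K j *ᵥ v))) ≤ g ⬝ᵥ (K j *ᵥ v) := by
      nlinarith [h1, hb]
    have h3 : (1/(N:ℝ)) * (-((N:ℝ) * lam * Real.sqrt (v ⬝ᵥ (K j *ᵥ v))))
        ≤ (1/(N:ℝ)) * (g ⬝ᵥ (K j *ᵥ v)) :=
      mul_le_mul_of_nonneg_left h2 (by positivity)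
    have h4 : (1/(N:ℝ)) * (-((N:ℝ) * lam * Real.sqrt (v ⬝ᵥ (K j *ᵥ v))))
        = -(lam * Real.sqrt (v ⬝ᵥ (K j *ᵥ v))) := by
      field_simp
    rw [h4] at h3
    linarith [h3]
  -- Upper bound: for every j,  lam·√(αKα) + (1/N)·(g ⬝ Kα) ≤ 0
  have upper : ∀ j, lam * Real.sqrt (αstar j ⬝ᵥ (K j *ᵥ αstar j))
      + (1/(N:ℝ)) * (g ⬝ᵥ (K j *ᵥ αstar j)) ≤ 0 := by
    intro j
    by_cases hjS : j ∈ S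
    · -- perturbation argument
      set a : ℝ := Real.sqrt (αstar j ⬝ᵥ (K j *ᵥ αstar j)) with ha
      set h : Fin N → ℝ := K j *ᵥ αstar j with hh
      set B : ℝ := (h ⬝ᵥ h) / (2 * N) with hB
      have hBnn : 0 ≤ B := by
        have : (0:ℝ) ≤ h ⬝ᵥ h := Finset.sum_nonneg fun i _ => mul_self_nonneg _
        positivity
      have key : ∀ s : ℝ, 0 < s → s ≤ 1 →
          lam * a + (1/(N:ℝ)) * (g ⬝ᵥ h) ≤ s * B := by
        intro s hs hs1
        set β : Fin m → Fin N → ℝ := Function.update αstar j ((1 - s) • αstar j) with hβ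
        have hsuppβ : ∀ j' ∉ S, β j' = 0 := by
          intro j' hj'
          have hne : j' ≠ j := fun hcontra => hj' (hcontra ▸ hjS)
          rw [hβ, Function.update_of_ne hne, hsupp j' hj']
        have hmle := hmin β hsuppβ
        rw [hL, hL] at hmle
        -- regularizer sum of β
        have hreg : ∑ j', Real.sqrt (β j' ⬝ᵥ (K j' *ᵥ β j'))
            = (∑ j', Real.sqrt (αstar j' ⬝ᵥ (K j' *ᵥ αstar j'))) - s * a := by
          have e1 : ∑ j', Real.sqrt (β j' ⬝ᵥ (K j' *ᵥ β j'))
              = Real.sqrt (((1-s) • αstar j) ⬝ᵥ (K j *ᵥ ((1-s) • αstar j)))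
                + ∑ j' ∈ univ \ {j}, Real.sqrt (αstar j' ⬝ᵥ (K j' *ᵥ αstar j')) := by
            rw [hβ]
            rw [show (fun j' => Real.sqrt (Function.update αstar j ((1-s) • αstar j) j' ⬝ᵥ
                (K j' *ᵥ Function.update αstar j ((1-s) • αstar j) j'))) =
              Function.update (fun j' => Real.sqrt (αstar j' ⬝ᵥ (K j' *ᵥ αstar j'))) j
                (Real.sqrt (((1-s) • αstar j) ⬝ᵥ (K j *ᵥ ((1-s) • αstar j)))) from ?_]
            · exact Finset.sum_update_of_mem (mem_univ j) _ _
            · funext j'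
              by_cases hj' : j' = j
              · subst hj'; simp
              · rw [Function.update_of_ne hj', Function.update_of_ne hj']
          have e2 : Real.sqrt (((1-s) • αstar j) ⬝ᵥ (K j *ᵥ ((1-s) • αstar j)))
              = (1 - s) * a := by
            rw [mulVec_smul, smul_dotProduct, dotProduct_smul, smul_eq_mul, smul_eq_mul,
              ← mul_assoc, ← sq]
            rw [Real.sqrt_mul (sq_nonneg _), Real.sqrt_sq (by linarith)]
          have e3 : ∑ j', Real.sqrt (αstar j' ⬝ᵥ (K j' *ᵥ αstar j'))
              = a + ∑ j' ∈ univ \ {j}, Real.sqrt (αstar j' ⬝ᵥ (K j' *ᵥ αstar j')) := by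
            rw [Finset.sum_eq_sum_sdiff_singleton_add (mem_univ j)]; ring
          rw [e1, e2, e3]; ring
        -- vector sum of β
        have hvec : ∑ j', K j' *ᵥ β j' = (∑ j', K j' *ᵥ αstar j') - s • h := by
          have e1 : ∑ j', K j' *ᵥ β j'
              = K j *ᵥ ((1-s) • αstar j) + ∑ j' ∈ univ \ {j}, K j' *ᵥ αstar j' := by
            rw [hβ]
            rw [show (fun j' => K j' *ᵥ Function.update αstar j ((1-s) • αstar j) j') =
              Function.update (fun j' => K j' *ᵥ αstar j') j (K j *ᵥ ((1-s) • αstar j)) from ?_]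
            · exact Finset.sum_update_of_mem (mem_univ j) _ _
            · funext j'
              by_cases hj' : j' = j
              · subst hj'; simp
              · rw [Function.update_of_ne hj', Function.update_of_ne hj']
          have e3 : ∑ j', K j' *ᵥ αstar j'
              = h + ∑ j' ∈ univ \ {j}, K j' *ᵥ αstar j' := by
            rw [Finset.sum_eq_sum_sdiff_singleton_add (mem_univ j)]
            rw [hh]; abel
          rw [e1, mulVec_smul, e3, sub_smul, one_smul]; abel
        have hres : (∑ j', K j' *ᵥ β j') - y = g - s • h := by
          rw [hvec, hg]; abel
        have hquad : ((∑ j', K j' *ᵥ β j') - y) ⬝ᵥ ((∑ j', K j' *ᵥ β j') - y)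
            = g ⬝ᵥ g - 2 * s * (g ⬝ᵥ h) + s^2 * (h ⬝ᵥ h) := by
          rw [hres]
          simp only [sub_dotProduct, dotProduct_sub, smul_dotProduct, dotProduct_smul,
            dotProduct_comm h g, smul_eq_mul]
          ring
        have hresα : (∑ j', K j' *ᵥ αstar j') - y = g := hg.symm
        rw [hreg, hquad, hresα] at hmle
        -- now hmle is a pure real inequality
        have hstep : s * (lam * a + (1/(N:ℝ)) * (g ⬝ᵥ h)) ≤ s * (s * B) := by
          have hN' : (N:ℝ) ≠ 0 := ne_of_gt hNpos
          rw [hB]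
          ring_nf at hmle ⊢
          nlinarith [hmle]
        exact le_of_mul_le_mul_left hstep hs
      -- conclude ≤ 0 by letting s → 0
      have hfinal : ∀ ε : ℝ, 0 < ε → lam * a + (1/(N:ℝ)) * (g ⬝ᵥ h) ≤ 0 + ε := by
        intro ε hε
        have hBp : 0 < B + 1 := by linarith
        set s : ℝ := min 1 (ε / (B + 1)) with hsdef
        have hspos : 0 < s := lt_min one_pos (by positivity)
        have hsle : s ≤ 1 := min_le_left _ _
        have h1 := key s hspos hsle
        have h2 : s * B ≤ ε := by
          calc s * B ≤ (ε / (B + 1)) * B :=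
                mul_le_mul_of_nonneg_right (min_le_right _ _) hBnn
            _ ≤ ε := by
                rw [div_mul_eq_mul_div, div_le_iff₀ hBp]
                nlinarith
        linarith
      linarith [le_of_forall_pos_le_add hfinal]
    · rw [hsupp j hjS]
      simp
  -- Main argument
  intro β
  rw [hL, hL]
  set d : Fin N → ℝ := (∑ j, K j *ᵥ β j) - (∑ j, K j *ᵥ αstar j) with hd
  have hresβ : (∑ j, K j *ᵥ β j) - y = g + d := by rw [hd, hg]; abel
  have hresα : (∑ j, K j *ᵥ αstar j) - y = g := hg.symm
  have hquadβ : ((∑ j, K j *ᵥ β j) - y) ⬝ᵥ ((∑ j, K j *ᵥ β j) - y)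
      = g ⬝ᵥ g + 2 * (g ⬝ᵥ d) + d ⬝ᵥ d := by
    rw [hresβ, dotProduct_add, add_dotProduct, add_dotProduct, dotProduct_comm d g]
    ring
  have hdd : (0:ℝ) ≤ d ⬝ᵥ d := Finset.sum_nonneg fun i _ => mul_self_nonneg _
  have hgd : g ⬝ᵥ d = (∑ j, g ⬝ᵥ (K j *ᵥ β j)) - ∑ j, g ⬝ᵥ (K j *ᵥ αstar j) := by
    rw [hd, dotProduct_sub, mkl_dot_sum, mkl_dot_sum]
  have hsum0 : 0 ≤ ∑ j, ((lam * Real.sqrt (β j ⬝ᵥ (K j *ᵥ β j))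
      + (1/(N:ℝ)) * (g ⬝ᵥ (K j *ᵥ β j)))
      - (lam * Real.sqrt (αstar j ⬝ᵥ (K j *ᵥ αstar j))
      + (1/(N:ℝ)) * (g ⬝ᵥ (K j *ᵥ αstar j)))) :=
    Finset.sum_nonneg fun j _ => by linarith [lower j (β j), upper j]
  rw [Finset.sum_sub_distrib, Finset.sum_add_distrib, Finset.sum_add_distrib,
    ← Finset.mul_sum, ← Finset.mul_sum, ← Finset.mul_sum, ← Finset.mul_sum] at hsum0
  have hsum : lam * (∑ j, Real.sqrt (αstar j ⬝ᵥ (K j *ᵥ αstar j)))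
      + (1/(N:ℝ)) * (∑ j, g ⬝ᵥ (K j *ᵥ αstar j))
      ≤ lam * (∑ j, Real.sqrt (β j ⬝ᵥ (K j *ᵥ β j)))
      + (1/(N:ℝ)) * (∑ j, g ⬝ᵥ (K j *ᵥ β j)) := by linarith [hsum0]
  rw [hquadβ, hresα]
  have hN' : (N:ℝ) ≠ 0 := ne_of_gt hNpos
  have hx : (1 / (2 * (N:ℝ))) * (g ⬝ᵥ g + 2 * (g ⬝ᵥ d) + d ⬝ᵥ d)
      = (1 / (2 * (N:ℝ))) * (g ⬝ᵥ g) + (1/(N:ℝ)) * (g ⬝ᵥ d)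
        + (1 / (2 * (N:ℝ))) * (d ⬝ᵥ d) := by
    field_simp
  rw [hx, hgd]
  have hddnn : 0 ≤ (1 / (2 * (N:ℝ))) * (d ⬝ᵥ d) := by positivity
  have := hsum
  rw [mul_sub] at *
  linarith [hsum, hddnn]
end

section
/- Run Algorithm 1: S_0 = ∅, α^0 = 0; for k = 1,…,d: with g^{k-1} = g(α^{k-1}), choose j_k ∈ argmax_{j∈[m]} (g^{k-1})ᵀ K_j g^{k-1}, set S_k = S_{k-1} ∪ {j_k}, and let α^k be a minimizer of L over tuples supported on S_k (such a minimizer exists). Let α* be any global minimizer of L and R = Σ_{j=1}^m √((α*_j)ᵀ K_j α*_j). If d ≥ 2 and the exit condition never triggers, i.e. (g^{k-1})ᵀ K_{j_k} g^{k-1} > N²λ² for every k = 1,…,d, then L(α^d) ≤ L(α*) + 2R²/(d−1). (This is the convergence-rate clause of Theorem 1: E_N(f) + λ‖f‖ ≤ E_N(f*) + λ‖f*‖ + 2‖f*‖²/(d−1).) -/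
open Matrix Finset

section helpers
variable {n : ℕ}

lemma psd_symm {M : Matrix (Fin n) (Fin n) ℝ} (hM : M.PosSemidef) (x z : Fin n → ℝ) :
    x ⬝ᵥ (M *ᵥ z) = z ⬝ᵥ (M *ᵥ x) := by
  have hs : Mᵀ = M := by
    have := hM.isHermitian
    simpa [Matrix.IsHermitian, Matrix.conjTranspose_eq_transpose_of_trivial] using this
  rw [dotProduct_mulVec, ← mulVec_transpose, hs, dotProduct_comm]

lemma psd_nonneg {M : Matrix (Fin n) (Fin n) ℝ} (hM : M.PosSemidef) (x : Fin n → ℝ) :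
    0 ≤ x ⬝ᵥ (M *ᵥ x) := by simpa using hM.dotProduct_mulVec_nonneg x

lemma psd_cauchy {M : Matrix (Fin n) (Fin n) ℝ} (hM : M.PosSemidef) (x z : Fin n → ℝ) :
    (x ⬝ᵥ (M *ᵥ z))^2 ≤ (x ⬝ᵥ (M *ᵥ x)) * (z ⬝ᵥ (M *ᵥ z)) := by
  have key : ∀ t : ℝ, 0 ≤ (z ⬝ᵥ (M *ᵥ z)) * (t*t) + (2 * (x ⬝ᵥ (M *ᵥ z))) * t + (x ⬝ᵥ (M *ᵥ x)) := by
    intro t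
    have h := psd_nonneg hM (x + t • z)
    have hexp : (x + t • z) ⬝ᵥ (M *ᵥ (x + t • z))
        = (z ⬝ᵥ (M *ᵥ z)) * (t*t) + (2 * (x ⬝ᵥ (M *ᵥ z))) * t + (x ⬝ᵥ (M *ᵥ x)) := by
      rw [mulVec_add, mulVec_smul, dotProduct_add, add_dotProduct, add_dotProduct,
        dotProduct_smul, smul_dotProduct, dotProduct_smul, psd_symm hM z x]
      simp [smul_eq_mul]; ring
    linarith [hexp ▸ h]
  have := discrim_le_zero key
  rw [discrim] at this
  nlinarith

lemma psd_cauchy' {M : Matrix (Fin n) (Fin n) ℝ} (hM : M.PosSemidef) (x z : Fin n → ℝ) :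
    x ⬝ᵥ (M *ᵥ z) ≤ Real.sqrt (x ⬝ᵥ (M *ᵥ x)) * Real.sqrt (z ⬝ᵥ (M *ᵥ z)) := by
  have h := psd_cauchy hM x z
  have h1 := psd_nonneg hM x
  calc x ⬝ᵥ (M *ᵥ z) ≤ |x ⬝ᵥ (M *ᵥ z)| := le_abs_self _
    _ = Real.sqrt ((x ⬝ᵥ (M *ᵥ z))^2) := (Real.sqrt_sq_eq_abs _).symm
    _ ≤ Real.sqrt ((x ⬝ᵥ (M *ᵥ x)) * (z ⬝ᵥ (M *ᵥ z))) := Real.sqrt_le_sqrt h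
    _ = _ := Real.sqrt_mul h1 _

lemma psd_triangle {M : Matrix (Fin n) (Fin n) ℝ} (hM : M.PosSemidef) (x z : Fin n → ℝ) :
    Real.sqrt ((x + z) ⬝ᵥ (M *ᵥ (x + z))) ≤
      Real.sqrt (x ⬝ᵥ (M *ᵥ x)) + Real.sqrt (z ⬝ᵥ (M *ᵥ z)) := by
  have h1 := psd_nonneg hM x
  have h2 := psd_nonneg hM z
  have hcs := psd_cauchy' hM x z
  have hexp : (x + z) ⬝ᵥ (M *ᵥ (x + z))
      = x ⬝ᵥ (M *ᵥ x) + 2 * (x ⬝ᵥ (M *ᵥ z)) + z ⬝ᵥ (M *ᵥ z) := by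
    rw [mulVec_add, dotProduct_add, add_dotProduct, add_dotProduct, psd_symm hM z x]; ring
  rw [hexp]
  have hb : x ⬝ᵥ (M *ᵥ x) + 2 * (x ⬝ᵥ (M *ᵥ z)) + z ⬝ᵥ (M *ᵥ z)
      ≤ (Real.sqrt (x ⬝ᵥ (M *ᵥ x)) + Real.sqrt (z ⬝ᵥ (M *ᵥ z)))^2 := by
    have := Real.sq_sqrt h1
    have := Real.sq_sqrt h2
    nlinarith
  calc Real.sqrt _ ≤ Real.sqrt ((Real.sqrt (x ⬝ᵥ (M *ᵥ x)) + Real.sqrt (z ⬝ᵥ (M *ᵥ z)))^2) :=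
        Real.sqrt_le_sqrt hb
    _ = _ := Real.sqrt_sq (by positivity)

lemma psd_mulVec_sq_le {M : Matrix (Fin n) (Fin n) ℝ} (hM : M.PosSemidef)
    (hdiag : ∀ i, M i i ≤ 1) (v : Fin n → ℝ) :
    (M *ᵥ v) ⬝ᵥ (M *ᵥ v) ≤ (n : ℝ) * (v ⬝ᵥ (M *ᵥ v)) := by
  have hvv := psd_nonneg hM v
  have hterm : ∀ i, ((M *ᵥ v) i)^2 ≤ v ⬝ᵥ (M *ᵥ v) := by
    intro i
    have hcs := psd_cauchy hM (Pi.single i 1) v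
    have h1 : (Pi.single i 1 : Fin n → ℝ) ⬝ᵥ (M *ᵥ v) = (M *ᵥ v) i := by simp
    have h2 : (Pi.single i 1 : Fin n → ℝ) ⬝ᵥ (M *ᵥ Pi.single i 1) = M i i := by
      simp [mulVec, dotProduct, Pi.single_apply]
    rw [h1, h2] at hcs
    have hMii : (0:ℝ) ≤ M i i := by
      have := psd_nonneg hM (Pi.single i 1)
      rwa [h2] at this
    nlinarith [hdiag i]
  calc (M *ᵥ v) ⬝ᵥ (M *ᵥ v) = ∑ i, ((M *ᵥ v) i)^2 := by simp [dotProduct, sq]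
    _ ≤ ∑ _i : Fin n, v ⬝ᵥ (M *ᵥ v) := Finset.sum_le_sum (fun i _ => hterm i)
    _ = (n : ℝ) * (v ⬝ᵥ (M *ᵥ v)) := by simp [mul_comm]

lemma lin_quad_zero (A B : ℝ) (hB : 0 ≤ B)
    (h : ∀ t : ℝ, -1 < t → t < 1 → 0 ≤ A * t + B * t^2) : A = 0 := by
  by_contra hA
  have habs : 0 < |A| := abs_pos.mpr hA
  set ε : ℝ := |A| / (2 * (B + |A|)) with hε
  have hden : 0 < 2 * (B + |A|) := by positivity
  have hε0 : 0 < ε := by positivity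
  have hε1 : ε < 1 := by rw [hε, div_lt_one hden]; nlinarith
  have h1 := h ε (by linarith) hε1
  have h2 := h (-ε) (by linarith) (by linarith)
  have hA2 : A ≤ B * ε := by nlinarith
  have : |A| ≤ B * ε := abs_le.mpr ⟨by nlinarith, hA2⟩
  rw [hε, ← mul_div_assoc, le_div_iff₀ hden] at this
  nlinarith

lemma dotProduct_sum' {ι : Type*} (v : Fin n → ℝ) (s : Finset ι) (w : ι → Fin n → ℝ) :
    v ⬝ᵥ (∑ j ∈ s, w j) = ∑ j ∈ s, v ⬝ᵥ (w j) := by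
  simp only [dotProduct, Finset.sum_apply, Finset.mul_sum]
  exact Finset.sum_comm

lemma dot_self_nonneg (v : Fin n → ℝ) : 0 ≤ v ⬝ᵥ v :=
  Finset.sum_nonneg fun i _ => mul_self_nonneg _
end helpers

set_option maxHeartbeats 2000000 in
/-- Convergence-rate clause of Theorem 1: running the greedy coordinate descent
Algorithm 1 for `d` steps (with the exit condition never triggering) yields
`L(α^d) ≤ L(α*) + 2R²/(d−1)`, where `R = Σ_j ‖f*_j‖_{H_j}`.
Here step `k+1` of the paper (k = 1,…,d) corresponds to index `k` (k = 0,…,d−1):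
`α k` plays the role of `α^{k}` and the gradient residual is `g(α^k)`. -/
theorem stmt_1 (N m : ℕ) (hN : 1 ≤ N) (hm : 1 ≤ m)
    (y : Fin N → ℝ) (lam : ℝ) (hlam : 0 < lam)
    (K : Fin m → Matrix (Fin N) (Fin N) ℝ)
    (hPSD : ∀ j, (K j).PosSemidef)
    (hdiag : ∀ j i, K j i i ≤ 1)
    (L : (Fin m → Fin N → ℝ) → ℝ)
    (hL : ∀ α : Fin m → Fin N → ℝ, L α =
      lam * ∑ j, Real.sqrt (α j ⬝ᵥ (K j *ᵥ α j)) +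
      (1 / (2 * N)) * ((∑ j, K j *ᵥ α j - y) ⬝ᵥ (∑ j, K j *ᵥ α j - y)))
    (g : (Fin m → Fin N → ℝ) → (Fin N → ℝ))
    (hg : ∀ α : Fin m → Fin N → ℝ, g α = ∑ j, K j *ᵥ α j - y)
    (d : ℕ) (hd : 2 ≤ d)
    (S : ℕ → Finset (Fin m)) (α : ℕ → Fin m → Fin N → ℝ) (jsel : ℕ → Fin m)
    (hS0 : S 0 = ∅) (hα0 : α 0 = 0)
    -- at step k+1 (0 ≤ k < d), jsel k maximizes the functional-norm gradient
    (hjmax : ∀ k < d, ∀ j : Fin m,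
      g (α k) ⬝ᵥ (K j *ᵥ g (α k)) ≤ g (α k) ⬝ᵥ (K (jsel k) *ᵥ g (α k)))
    (hSstep : ∀ k < d, S (k+1) = insert (jsel k) (S k))
    (hαsupp : ∀ k < d, ∀ j ∉ S (k+1), α (k+1) j = 0)
    (hαmin : ∀ k < d, ∀ β : Fin m → Fin N → ℝ,
      (∀ j ∉ S (k+1), β j = 0) → L (α (k+1)) ≤ L β)
    (αstar : Fin m → Fin N → ℝ)
    (hstar : ∀ β : Fin m → Fin N → ℝ, L αstar ≤ L β)
    (R : ℝ) (hR : R = ∑ j, Real.sqrt (αstar j ⬝ᵥ (K j *ᵥ αstar j)))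
    -- the exit condition never triggers
    (hnoexit : ∀ k < d, (N : ℝ)^2 * lam^2 < g (α k) ⬝ᵥ (K (jsel k) *ᵥ g (α k))) :
    L (α d) ≤ L αstar + 2 * R^2 / ((d : ℝ) - 1) := by
  have hNpos : (0:ℝ) < N := by exact_mod_cast hN
  -- abbreviations
  obtain ⟨P, hP⟩ : ∃ P' : (Fin m → Fin N → ℝ) → ℝ,
      P' = fun β => ∑ j, Real.sqrt (β j ⬝ᵥ (K j *ᵥ β j)) := ⟨_, rfl⟩
  obtain ⟨u, hu⟩ : ∃ u' : (Fin m → Fin N → ℝ) → (Fin N → ℝ),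
      u' = fun β => ∑ j, K j *ᵥ β j := ⟨_, rfl⟩
  have hL' : ∀ β, L β = lam * P β + (1/(2*N)) * ((u β - y) ⬝ᵥ (u β - y)) := by
    intro β; simp only [hP, hu]; exact hL β
  have hg' : ∀ β, g β = u β - y := by
    intro β; simp only [hu]; exact hg β
  obtain ⟨c, hc⟩ : ∃ c' : ℕ → ℝ,
      c' = fun k => g (α k) ⬝ᵥ (K (jsel k) *ᵥ g (α k)) := ⟨_, rfl⟩
  obtain ⟨a, ha⟩ : ∃ a' : ℕ → ℝ, a' = fun k => L (α k) - L αstar := ⟨_, rfl⟩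
  have hRnn : 0 ≤ R := by
    rw [hR]; exact Finset.sum_nonneg fun j _ => Real.sqrt_nonneg _
  have hann : ∀ k, 0 ≤ a k := by
    intro k; simp only [ha]; exact sub_nonneg.mpr (hstar _)
  -- support of α k
  have hsupp : ∀ k, k ≤ d → ∀ j, j ∉ S k → α k j = 0 := by
    intro k hk j hj
    cases k with
    | zero => simp [hα0]
    | succ k0 => exact hαsupp k0 (by omega) j hj
  -- monotonicity
  have hmono : ∀ k, k < d → L (α (k+1)) ≤ L (α k) := by
    intro k hk
    refine hαmin k hk (α k) (fun j hj => hsupp k (by omega) j (fun hjS => hj ?_))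
    rw [hSstep k hk]; exact Finset.mem_insert_of_mem hjS
  -- optimality identity at step k ≥ 1
  have hNne : (N:ℝ) ≠ 0 := ne_of_gt hNpos
  have hopt : ∀ k, 1 ≤ k → k ≤ d →
      lam * P (α k) + (1/N) * (g (α k) ⬝ᵥ u (α k)) = 0 := by
    intro k hk1 hkd
    obtain ⟨k0, rfl⟩ : ∃ k0, k = k0 + 1 := ⟨k - 1, by omega⟩
    set v := α (k0+1) with hv
    have hBnn : (0:ℝ) ≤ (1/(2*N)) * (u v ⬝ᵥ u v) := by
      have := dot_self_nonneg (u v); positivity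
    rw [hg']
    apply lin_quad_zero _ _ hBnn
    intro t ht1 ht2
    have h1t : (0:ℝ) ≤ 1 + t := by linarith
    set β : Fin m → Fin N → ℝ := fun j => (1+t) • v j with hβ
    have hsuppβ : ∀ j ∉ S (k0+1), β j = 0 := by
      intro j hj
      have hz := hsupp (k0+1) hkd j hj
      simp [hβ, hv, hz]
    have hle := hαmin k0 (by omega) β hsuppβ
    have hPβ : P β = (1+t) * P v := by
      simp only [hP]
      rw [Finset.mul_sum]
      refine Finset.sum_congr rfl (fun j _ => ?_)
      have he : β j ⬝ᵥ (K j *ᵥ β j) = (1+t)^2 * (v j ⬝ᵥ (K j *ᵥ v j)) := by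
        simp only [hβ]
        rw [mulVec_smul, dotProduct_smul, smul_dotProduct]
        simp [smul_eq_mul]; ring
      rw [he, Real.sqrt_mul (sq_nonneg _), Real.sqrt_sq h1t]
    have huβ : u β = (1+t) • u v := by
      simp only [hu, hβ, Finset.smul_sum, mulVec_smul]
    have hres : (u β - y) ⬝ᵥ (u β - y)
        = (u v - y) ⬝ᵥ (u v - y) + 2*t*((u v - y) ⬝ᵥ u v) + t^2 * (u v ⬝ᵥ u v) := by
      have e1 : u β - y = (u v - y) + t • u v := by
        rw [huβ]; funext i; simp [smul_eq_mul]; ring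
      rw [e1, add_dotProduct, dotProduct_add, dotProduct_add,
        dotProduct_comm (t • u v) (u v - y)]
      simp only [dotProduct_smul, smul_dotProduct, smul_eq_mul]
      ring
    rw [hL' β, hL' v, hPβ, hres] at hle
    have key : 0 ≤ lam * t * P v + (1/(2*N)) * (2*t*((u v - y) ⬝ᵥ u v) + t^2 * (u v ⬝ᵥ u v)) := by
      nlinarith [hle]
    have : lam * t * P v + (1/(2*N)) * (2*t*((u v - y) ⬝ᵥ u v) + t^2 * (u v ⬝ᵥ u v))
        = (lam * P v + 1/N * ((u v - y) ⬝ᵥ u v)) * t + (1/(2*N) * (u v ⬝ᵥ u v)) * t^2 := by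
      field_simp; ring
    linarith [this ▸ key]
  -- gap bound via the selected coordinate
  have hbound : ∀ k, 1 ≤ k → k < d → a k ≤ (Real.sqrt (c k) / N - lam) * R := by
    intro k hk1 hkd
    have hid : g (α k) ⬝ᵥ u (α k) = -(N * (lam * P (α k))) := by
      have := hopt k hk1 (le_of_lt hkd)
      field_simp at this
      linarith
    have hGk : g (α k) = u (α k) - y := hg' _
    have hGs : g αstar = u αstar - y := hg' _
    -- square loss comparison
    have hsq : g (α k) ⬝ᵥ g (α k) - g αstar ⬝ᵥ g αstar
        ≤ 2 * (g (α k) ⬝ᵥ u (α k) - g (α k) ⬝ᵥ u αstar) := by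
      have h0 := dot_self_nonneg (g αstar - g (α k))
      have hexp : (g αstar - g (α k)) ⬝ᵥ (g αstar - g (α k))
          = g αstar ⬝ᵥ g αstar - 2 * (g (α k) ⬝ᵥ g αstar) + g (α k) ⬝ᵥ g (α k) := by
        rw [dotProduct_sub, sub_dotProduct, sub_dotProduct,
          dotProduct_comm (g αstar) (g (α k))]
        ring
      have hdiff : g (α k) ⬝ᵥ u (α k) - g (α k) ⬝ᵥ u αstar
          = g (α k) ⬝ᵥ g (α k) - g (α k) ⬝ᵥ g αstar := by
        rw [hGk, hGs, dotProduct_sub, dotProduct_sub]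
        ring
      rw [hdiff]
      linarith [hexp ▸ h0]
    -- star term bound
    have hstarterm : -(g (α k) ⬝ᵥ u αstar) ≤ Real.sqrt (c k) * R := by
      have hsum : g (α k) ⬝ᵥ u αstar = ∑ j, g (α k) ⬝ᵥ (K j *ᵥ αstar j) := by
        simp only [hu]
        exact dotProduct_sum' _ _ _
      rw [hsum, ← Finset.sum_neg_distrib, hR, Finset.mul_sum]
      refine Finset.sum_le_sum (fun j _ => ?_)
      have hneg : -(g (α k) ⬝ᵥ (K j *ᵥ αstar j)) = g (α k) ⬝ᵥ (K j *ᵥ (-(αstar j))) := by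
        rw [mulVec_neg, dotProduct_neg]
      have hcs := psd_cauchy' (hPSD j) (g (α k)) (-(αstar j))
      have hqq : (-(αstar j)) ⬝ᵥ (K j *ᵥ (-(αstar j))) = αstar j ⬝ᵥ (K j *ᵥ αstar j) := by
        rw [mulVec_neg, dotProduct_neg, neg_dotProduct]; ring
      rw [hqq] at hcs
      have hmono' : Real.sqrt (g (α k) ⬝ᵥ (K j *ᵥ g (α k))) ≤ Real.sqrt (c k) := by
        apply Real.sqrt_le_sqrt; rw [hc]; exact hjmax k hkd j
      have := mul_le_mul_of_nonneg_right hmono' (Real.sqrt_nonneg (αstar j ⬝ᵥ (K j *ᵥ αstar j)))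
      rw [hneg]
      calc g (α k) ⬝ᵥ (K j *ᵥ (-(αstar j)))
          ≤ Real.sqrt (g (α k) ⬝ᵥ (K j *ᵥ g (α k))) * Real.sqrt (αstar j ⬝ᵥ (K j *ᵥ αstar j)) := hcs
        _ ≤ Real.sqrt (c k) * Real.sqrt (αstar j ⬝ᵥ (K j *ᵥ αstar j)) := this
    -- assemble: N * a k ≤ sqrt(c k) * R - N * lam * R
    have hNa : (N:ℝ) * a k ≤ Real.sqrt (c k) * R - N * lam * R := by
      have hLk := hL' (α k)
      have hLs := hL' αstar
      have hPstar : P αstar = R := by simp only [hP]; exact hR.symm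
      have haval : a k = lam * P (α k) - lam * R
          + (1/(2*N)) * (g (α k) ⬝ᵥ g (α k) - g αstar ⬝ᵥ g αstar) := by
        simp only [ha]
        rw [hLk, hLs, hPstar, hGk, hGs]
        ring
      have hhalf : (N:ℝ) * ((1/(2*N)) * (g (α k) ⬝ᵥ g (α k) - g αstar ⬝ᵥ g αstar))
          = (1/2) * (g (α k) ⬝ᵥ g (α k) - g αstar ⬝ᵥ g αstar) := by
        field_simp
      have h1 : (N:ℝ) * a k = N * lam * P (α k) - N * lam * R
          + (1/2) * (g (α k) ⬝ᵥ g (α k) - g αstar ⬝ᵥ g αstar) := by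
        rw [haval]
        field_simp
      have h2 : (N:ℝ) * a k ≤ N * lam * P (α k) - N * lam * R
          + (g (α k) ⬝ᵥ u (α k) - g (α k) ⬝ᵥ u αstar) := by linarith [h1, hsq]
      have h3 : (N:ℝ) * a k ≤ - (N * lam * R) - g (α k) ⬝ᵥ u αstar := by linarith [h2, hid]
      linarith [h3, hstarterm]
    have hform : (Real.sqrt (c k) / N - lam) * R
        = (Real.sqrt (c k) * R - N * lam * R) / N := by
      field_simp
    rw [hform, le_div_iff₀ hNpos]
    linarith [hNa, mul_comm (N:ℝ) (a k)]
  -- progress inequality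
  have hprog : ∀ k, 1 ≤ k → k < d →
      a (k+1) ≤ a k - (Real.sqrt (c k) / N - lam)^2 / 2 := by
    intro k hk1 hkd
    have hck : (N:ℝ)^2*lam^2 < c k := by rw [hc]; exact hnoexit k hkd
    have hcpos : 0 < c k := lt_of_le_of_lt (by positivity) hck
    have hGK : g (α k) ⬝ᵥ (K (jsel k) *ᵥ g (α k)) = c k := by rw [hc]
    set s := Real.sqrt (c k) with hs
    have hs2 : s^2 = c k := Real.sq_sqrt (le_of_lt hcpos)
    have hspos : 0 < s := Real.sqrt_pos.mpr hcpos
    have hsne : s ≠ 0 := ne_of_gt hspos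
    have hsN : (N:ℝ)*lam < s := by nlinarith [hspos, hNpos, hlam]
    set t : ℝ := 1/N - lam/s with ht
    have htpos : 0 < t := by
      rw [ht, sub_pos, div_lt_div_iff₀ hspos hNpos]; nlinarith
    set β : Fin m → Fin N → ℝ :=
      Function.update (α k) (jsel k) (α k (jsel k) - t • g (α k)) with hβ
    have hjmem : jsel k ∈ S (k+1) := by
      rw [hSstep k hkd]; exact Finset.mem_insert_self _ _
    have hsuppβ : ∀ j' ∉ S (k+1), β j' = 0 := by
      intro j' hj'
      have hne : j' ≠ jsel k := fun h => hj' (h ▸ hjmem)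
      rw [hβ, Function.update_of_ne hne]
      refine hsupp k (by omega) j' (fun hS => hj' ?_)
      rw [hSstep k hkd]; exact Finset.mem_insert_of_mem hS
    have hle := hαmin k hkd β hsuppβ
    -- P β ≤ P (α k) + t * s
    have hPβ : P β ≤ P (α k) + t * s := by
      simp only [hP]
      rw [← Finset.sum_erase_add _ _ (Finset.mem_univ (jsel k)),
        ← Finset.sum_erase_add (f := fun j' => Real.sqrt (α k j' ⬝ᵥ (K j' *ᵥ α k j')))
          _ (Finset.mem_univ (jsel k))]
      have herase : ∑ j' ∈ Finset.univ.erase (jsel k), Real.sqrt (β j' ⬝ᵥ (K j' *ᵥ β j'))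
          = ∑ j' ∈ Finset.univ.erase (jsel k), Real.sqrt (α k j' ⬝ᵥ (K j' *ᵥ α k j')) := by
        refine Finset.sum_congr rfl fun j' hj' => ?_
        rw [hβ, Function.update_of_ne (Finset.ne_of_mem_erase hj')]
      rw [herase]
      have hβj : β (jsel k) = α k (jsel k) + (-(t • g (α k))) := by
        rw [hβ, Function.update_self, sub_eq_add_neg]
      have htri := psd_triangle (hPSD (jsel k)) (α k (jsel k)) (-(t • g (α k)))
      have hneg : (-(t • g (α k))) ⬝ᵥ (K (jsel k) *ᵥ (-(t • g (α k)))) = t^2 * c k := by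
        rw [mulVec_neg, dotProduct_neg, neg_dotProduct, neg_neg, mulVec_smul,
          dotProduct_smul, smul_dotProduct, ← hGK]
        simp [smul_eq_mul]; ring
      have hsqv : Real.sqrt ((-(t • g (α k))) ⬝ᵥ (K (jsel k) *ᵥ (-(t • g (α k))))) = t * s := by
        rw [hneg, Real.sqrt_mul (sq_nonneg t), Real.sqrt_sq (le_of_lt htpos), hs]
      rw [hβj]
      rw [hsqv] at htri
      linarith [htri]
    -- u β
    have huβ : u β = u (α k) - t • (K (jsel k) *ᵥ g (α k)) := by
      simp only [hu]
      rw [← Finset.sum_erase_add _ _ (Finset.mem_univ (jsel k)),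
        ← Finset.sum_erase_add (f := fun j' => K j' *ᵥ α k j') _ (Finset.mem_univ (jsel k))]
      have herase : ∑ j' ∈ Finset.univ.erase (jsel k), K j' *ᵥ β j'
          = ∑ j' ∈ Finset.univ.erase (jsel k), K j' *ᵥ α k j' := by
        refine Finset.sum_congr rfl fun j' hj' => ?_
        rw [hβ, Function.update_of_ne (Finset.ne_of_mem_erase hj')]
      rw [herase, hβ, Function.update_self, mulVec_sub, mulVec_smul]
      abel
    have hresid : u β - y = g (α k) - t • (K (jsel k) *ᵥ g (α k)) := by
      rw [huβ, hg' (α k)]; abel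
    have hKG := psd_mulVec_sq_le (hPSD (jsel k)) (hdiag (jsel k)) (g (α k))
    rw [hGK] at hKG
    have hres : (u β - y) ⬝ᵥ (u β - y)
        ≤ g (α k) ⬝ᵥ g (α k) - 2*t*(c k) + t^2*(N * c k) := by
      have hexp : (u β - y) ⬝ᵥ (u β - y)
          = g (α k) ⬝ᵥ g (α k) - 2*t*(c k)
            + t^2 * ((K (jsel k) *ᵥ g (α k)) ⬝ᵥ (K (jsel k) *ᵥ g (α k))) := by
        rw [hresid, dotProduct_sub, sub_dotProduct, sub_dotProduct,
          dotProduct_comm (t • (K (jsel k) *ᵥ g (α k))) (g (α k)),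
          dotProduct_smul, smul_dotProduct, dotProduct_smul, ← hGK]
        simp only [smul_eq_mul]
        ring
      rw [hexp]
      nlinarith [hKG, sq_nonneg t]
    -- assemble L β bound
    have hgk : (u (α k) - y) ⬝ᵥ (u (α k) - y) = g (α k) ⬝ᵥ g (α k) := by
      rw [← hg' (α k)]
    have h2N : (0:ℝ) < 1/(2*(N:ℝ)) := by positivity
    have hLβ : L β ≤ L (α k) + (lam * t * s - t * c k / N + t^2 * c k / 2) := by
      rw [hL' β, hL' (α k), hgk]
      have hb1 : lam * P β ≤ lam * (P (α k) + t * s) :=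
        mul_le_mul_of_nonneg_left hPβ (le_of_lt hlam)
      have hb2 : (1/(2*(N:ℝ))) * ((u β - y) ⬝ᵥ (u β - y))
          ≤ (1/(2*(N:ℝ))) * (g (α k) ⬝ᵥ g (α k) - 2*t*(c k) + t^2*(N * c k)) :=
        mul_le_mul_of_nonneg_left hres (le_of_lt h2N)
      have hident : lam * (P (α k) + t * s)
            + (1/(2*(N:ℝ))) * (g (α k) ⬝ᵥ g (α k) - 2*t*(c k) + t^2*(N * c k))
          = lam * P (α k) + (1/(2*(N:ℝ))) * (g (α k) ⬝ᵥ g (α k))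
            + (lam * t * s - t * c k / N + t^2 * c k / 2) := by
        field_simp
        ring
      calc lam * P β + (1/(2*(N:ℝ))) * ((u β - y) ⬝ᵥ (u β - y))
          ≤ lam * (P (α k) + t * s)
            + (1/(2*(N:ℝ))) * (g (α k) ⬝ᵥ g (α k) - 2*t*(c k) + t^2*(N * c k)) :=
            add_le_add hb1 hb2
        _ = lam * P (α k) + (1/(2*(N:ℝ))) * (g (α k) ⬝ᵥ g (α k))
            + (lam * t * s - t * c k / N + t^2 * c k / 2) := hident
    have hval : lam * t * s - t * c k / N + t^2 * c k / 2 = -((s/N - lam)^2/2) := by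
      rw [ht, ← hs2]
      field_simp
      ring
    rw [hval] at hLβ
    simp only [ha]
    have := le_trans hle hLβ
    linarith [this]
  -- final combination
  have hgoal : a d ≤ 2 * R^2 / ((d:ℝ) - 1) → L (α d) ≤ L αstar + 2 * R^2 / ((d:ℝ) - 1) := by
    intro h; simp only [ha] at h; linarith
  apply hgoal
  have hd1 : (1:ℝ) ≤ (d:ℝ) - 1 := by
    have : (2:ℝ) ≤ (d:ℝ) := by exact_mod_cast hd
    linarith
  have hstepm : ∀ k, k < d → a (k+1) ≤ a k := by
    intro k hk; simp only [ha]; linarith [hmono k hk]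
  by_cases had : a d ≤ 0
  · have hq : 0 ≤ 2 * R^2 / ((d:ℝ) - 1) := by positivity
    linarith
  push_neg at had
  have hposall : ∀ k, k ≤ d → 0 < a k := by
    intro k hk
    have hchain : ∀ i, k + i ≤ d → a (k + i) ≤ a k := by
      intro i
      induction i with
      | zero => intro _; simp
      | succ n ih =>
        intro h
        have h2 := ih (by omega)
        have h3 := hstepm (k+n) (by omega)
        calc a (k+n+1) ≤ a (k+n) := h3
          _ ≤ a k := h2
    have hdk := hchain (d - k) (by omega)
    rw [show k + (d-k) = d by omega] at hdk
    linarith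
  have hRpos : 0 < R := by
    rcases lt_or_eq_of_le hRnn with h | h
    · exact h
    exfalso
    have hb := hbound (d-1) (by omega) (by omega)
    rw [← h] at hb
    have hp := hposall (d-1) (by omega)
    simp at hb
    linarith
  -- recursion
  have hrec : ∀ k, 1 ≤ k → k < d → a (k+1) ≤ a k - (a k)^2/(2*R^2) := by
    intro k h1 h2
    have hb := hbound k h1 h2
    have hp := hprog k h1 h2
    have hak := hposall k (by omega)
    have hsl : a k / R ≤ Real.sqrt (c k)/N - lam := by
      rw [div_le_iff₀ hRpos] at *
      linarith [hb]
    have hsq2 : (a k / R)^2 ≤ (Real.sqrt (c k)/N - lam)^2 := by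
      have h0 : 0 < a k / R := div_pos hak hRpos
      nlinarith
    have hexp : (a k / R)^2 = a k^2 / R^2 := by rw [div_pow]
    rw [hexp] at hsq2
    have : a k^2/(2*R^2) = (a k^2/R^2)/2 := by ring
    linarith [hsq2, hp, this]
  -- inverse increments
  have hinv : ∀ k, 1 ≤ k → k < d → 1/(a k) + 1/(2*R^2) ≤ 1/(a (k+1)) := by
    intro k h1 h2
    have hak := hposall k (by omega)
    have hak1 := hposall (k+1) (by omega)
    have hrk := hrec k h1 h2
    have hstep := hstepm k h2
    have hcross : (2*R^2 + a k) * a (k+1) ≤ 2*R^2 * a k := by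
      have hRR : 0 < 2*R^2 := by positivity
      have hkey : a (k+1) * (2*R^2) ≤ a k * (2*R^2) - a k^2 := by
        have := mul_le_mul_of_nonneg_right hrk (le_of_lt hRR)
        calc a (k+1) * (2*R^2) ≤ (a k - a k^2/(2*R^2)) * (2*R^2) := this
          _ = a k * (2*R^2) - a k^2 * ((2*R^2)/(2*R^2)) := by ring
          _ = a k * (2*R^2) - a k^2 := by rw [div_self (ne_of_gt hRR)]; ring
      nlinarith [hkey, hstep, hak1, hak]
    have e1 : 1/(a k) + 1/(2*R^2) = (2*R^2 + a k)/(a k * (2*R^2)) := by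
      field_simp <;> ring
    rw [e1, div_le_div_iff₀ (by positivity) hak1]
    calc (2*R^2 + a k) * a (k+1) ≤ 2*R^2 * a k := hcross
      _ = 1 * (a k * (2*R^2)) := by ring
  -- induction: (k-1)/(2R²) ≤ 1/a k
  have hsum : ∀ k, 1 ≤ k → k ≤ d → ((k:ℝ) - 1)/(2*R^2) ≤ 1/(a k) := by
    intro k hk1 hkd
    induction k with
    | zero => omega
    | succ n ih =>
      rcases Nat.eq_or_lt_of_le hk1 with h | h
      · have hn0 : n = 0 := by omega
        subst hn0
        have := hposall 1 (by omega)
        simp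
        positivity
      · have hn1 : 1 ≤ n := by omega
        have hnd : n < d := by omega
        have hih := ih hn1 (by omega)
        have hstep := hinv n hn1 hnd
        have : ((n:ℝ) + 1 - 1)/(2*R^2) = ((n:ℝ) - 1)/(2*R^2) + 1/(2*R^2) := by ring
        push_cast
        rw [this]
        linarith
  have hfinal := hsum d (by omega) le_rfl
  have hadpos := had
  have hd1pos : (0:ℝ) < (d:ℝ) - 1 := by linarith
  rw [div_le_div_iff₀ (by positivity : (0:ℝ) < 2*R^2) hadpos] at hfinal
  rw [le_div_iff₀ hd1pos]
  nlinarith [hfinal]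
end

section
/- Suppose α is a minimizer of L among tuples supported on some S ⊆ {1,…,m}, with residual g = g(α). Then for every tuple β = (β_1,…,β_m): L(α) − L(β) ≤ (Σ_{j=1}^m √(β_jᵀ K_j β_j)) · max(0, max_{j∈[m]} √(gᵀ K_j g)/N − λ). (This is the dual-gap bound L(f^k) − L(f*) ≤ ‖f*‖·[max_j ‖∇_j E_N(f^k)‖ − λ]_+ used in the proof of Theorem 1.) -/
open Matrix Finset

open scoped MatrixOrder in
lemma psd_cauchy_schwarz {N : ℕ} {K : Matrix (Fin N) (Fin N) ℝ} (hK : K.PosSemidef)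
    (u v : Fin N → ℝ) :
    u ⬝ᵥ (K *ᵥ v) ≤ Real.sqrt (u ⬝ᵥ (K *ᵥ u)) * Real.sqrt (v ⬝ᵥ (K *ᵥ v)) := by
  set R := CFC.sqrt K with hR
  have hRsymm : Rᵀ = R := by
    have h := (Matrix.nonneg_iff_posSemidef.mp (CFC.sqrt_nonneg K)).1
    simpa [Matrix.IsHermitian] using h
  have key : ∀ a b : Fin N → ℝ, a ⬝ᵥ (K *ᵥ b) = (R *ᵥ a) ⬝ᵥ (R *ᵥ b) := by
    intro a b
    rw [← CFC.sqrt_mul_sqrt_self K (Matrix.nonneg_iff_posSemidef.mpr hK), ← Matrix.mulVec_mulVec, Matrix.dotProduct_mulVec,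
      ← Matrix.mulVec_transpose, hRsymm]
  rw [key u v, key u u, key v v]
  set p := R *ᵥ u
  set q := R *ᵥ v
  have hpp : 0 ≤ p ⬝ᵥ p := Finset.sum_nonneg fun i _ => mul_self_nonneg _
  have h2 : (p ⬝ᵥ q) ^ 2 ≤ (p ⬝ᵥ p) * (q ⬝ᵥ q) := by
    have := Finset.sum_mul_sq_le_sq_mul_sq Finset.univ p q
    simpa [dotProduct, sq] using this
  calc p ⬝ᵥ q ≤ |p ⬝ᵥ q| := le_abs_self _
    _ = Real.sqrt ((p ⬝ᵥ q) ^ 2) := (Real.sqrt_sq_eq_abs _).symm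
    _ ≤ Real.sqrt ((p ⬝ᵥ p) * (q ⬝ᵥ q)) := Real.sqrt_le_sqrt h2
    _ = Real.sqrt (p ⬝ᵥ p) * Real.sqrt (q ⬝ᵥ q) := Real.sqrt_mul hpp _

/-- Dual-gap bound used in the proof of Theorem 1: if `α` minimizes `L` over
tuples supported on `S`, then for every tuple `β`,
`L(α) − L(β) ≤ (Σ_j ‖β_j‖_{H_j}) · [max_j ‖∇_j E_N‖ − λ]_+`. -/
theorem stmt_2 (N m : ℕ) (hN : 1 ≤ N) (hm : 1 ≤ m)
    (y : Fin N → ℝ) (lam : ℝ) (hlam : 0 < lam)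
    (K : Fin m → Matrix (Fin N) (Fin N) ℝ)
    (hPSD : ∀ j, (K j).PosSemidef)
    (hdiag : ∀ j i, K j i i ≤ 1)
    (L : (Fin m → Fin N → ℝ) → ℝ)
    (hL : ∀ α : Fin m → Fin N → ℝ, L α =
      lam * ∑ j, Real.sqrt (α j ⬝ᵥ (K j *ᵥ α j)) +
      (1 / (2 * N)) * ((∑ j, K j *ᵥ α j - y) ⬝ᵥ (∑ j, K j *ᵥ α j - y)))
    (S : Finset (Fin m)) (α : Fin m → Fin N → ℝ)
    (hsupp : ∀ j ∉ S, α j = 0)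
    (hmin : ∀ β : Fin m → Fin N → ℝ, (∀ j ∉ S, β j = 0) → L α ≤ L β)
    (g : Fin N → ℝ) (hg : g = ∑ j, K j *ᵥ α j - y) :
    ∀ β : Fin m → Fin N → ℝ,
      L α - L β ≤ (∑ j, Real.sqrt (β j ⬝ᵥ (K j *ᵥ β j))) *
        max 0 ((Finset.univ.sup' (Finset.univ_nonempty_iff.mpr ⟨⟨0, hm⟩⟩)
          fun j => Real.sqrt (g ⬝ᵥ (K j *ᵥ g)) / N) - lam) := by
  intro β
  classical
  have hNpos : (0:ℝ) < N := by exact_mod_cast hN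
  set Fa : Fin N → ℝ := ∑ j, K j *ᵥ α j with hFa
  set Fb : Fin N → ℝ := ∑ j, K j *ᵥ β j with hFb
  set A : ℝ := ∑ j, Real.sqrt (α j ⬝ᵥ (K j *ᵥ α j)) with hAdef
  set B : ℝ := ∑ j, Real.sqrt (β j ⬝ᵥ (K j *ᵥ β j)) with hBdef
  set P : ℝ := g ⬝ᵥ Fa with hPdef
  set Q : ℝ := Fa ⬝ᵥ Fa with hQdef
  have hQ0 : 0 ≤ Q := Finset.sum_nonneg fun i _ => mul_self_nonneg _
  have hqform : ∀ (j : Fin m) (v : Fin N → ℝ), 0 ≤ v ⬝ᵥ (K j *ᵥ v) := by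
    intro j v
    have := (hPSD j).dotProduct_mulVec_nonneg v
    simpa using this
  -- L α in terms of g
  have hLa : L α = lam * A + (1 / (2 * N)) * (g ⬝ᵥ g) := by
    rw [hL α, hg]
  -- Stationarity: lam * A + P / N ≤ 0
  have hstat : lam * A + P / N ≤ 0 := by
    have key : ∀ ε : ℝ, 0 < ε → ε ≤ 1 → lam * A + P / N ≤ (Q / (2 * N)) * ε := by
      intro ε hε hε1
      set t : ℝ := 1 - ε with ht
      have ht0 : 0 ≤ t := by simp [ht]; linarith
      have hsupp' : ∀ j ∉ S, (t • α) j = 0 := by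
        intro j hj
        have : α j = 0 := hsupp j hj
        simp [this]
      have hmono := hmin (t • α) hsupp'
      have hsum : (∑ j, K j *ᵥ (t • α) j) = t • Fa := by
        rw [hFa, Finset.smul_sum]
        refine Finset.sum_congr rfl fun j _ => ?_
        simp [Matrix.mulVec_smul]
      have hnorm : (∑ j, Real.sqrt ((t • α) j ⬝ᵥ (K j *ᵥ (t • α) j))) = t * A := by
        rw [hAdef, Finset.mul_sum]
        refine Finset.sum_congr rfl fun j _ => ?_
        have : (t • α) j ⬝ᵥ (K j *ᵥ (t • α) j) = t ^ 2 * (α j ⬝ᵥ (K j *ᵥ α j)) := by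
          simp [Matrix.mulVec_smul, smul_dotProduct, dotProduct_smul,
            smul_eq_mul]
          ring
        rw [this, Real.sqrt_mul (sq_nonneg t), Real.sqrt_sq ht0]
      have hres : (t • Fa - y) = g + (t - 1) • Fa := by
        rw [hg]; module
      have hsq : (t • Fa - y) ⬝ᵥ (t • Fa - y) =
          g ⬝ᵥ g + 2 * (t - 1) * P + (t - 1) ^ 2 * Q := by
        rw [hres, hPdef, hQdef]
        simp [dotProduct_add, add_dotProduct, smul_dotProduct,
          dotProduct_smul, smul_eq_mul]
        rw [dotProduct_comm Fa g]
        ring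
      have hLt : L (t • α) = lam * (t * A) +
          (1 / (2 * N)) * (g ⬝ᵥ g + 2 * (t - 1) * P + (t - 1) ^ 2 * Q) := by
        rw [hL (t • α), hnorm, hsum, hsq]
      rw [hLa, hLt] at hmono
      have ht1 : t - 1 = -ε := by simp [ht]
      rw [ht1] at hmono
      have hmono' : (lam * A + P / ↑N) * ε ≤ (Q / (2 * ↑N) * ε) * ε := by
        rw [ht] at hmono
        have hNne : (↑N:ℝ) ≠ 0 := ne_of_gt hNpos
        ring_nf at hmono ⊢
        nlinarith [hmono]
      exact le_of_mul_le_mul_right hmono' hε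
    by_contra hcon
    push_neg at hcon
    set c : ℝ := Q / (2 * ↑N) with hcdef
    set D : ℝ := lam * A + P / ↑N with hDdef
    have hc0 : 0 ≤ c := by positivity
    have hε : (0:ℝ) < min 1 (D / (2 * (c + 1))) := by
      apply lt_min one_pos
      positivity
    have h := key _ hε (min_le_left _ _)
    have hlt : c * min 1 (D / (2 * (c + 1))) < D := by
      have h1 : min 1 (D / (2 * (c + 1))) ≤ D / (2 * (c + 1)) := min_le_right _ _
      have h2 : c * min 1 (D / (2 * (c + 1))) ≤ c * (D / (2 * (c + 1))) :=
        mul_le_mul_of_nonneg_left h1 hc0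
      have h4 : c / (2 * (c + 1)) < 1 := by
        rw [div_lt_one (by linarith)]; linarith
      have h3 : c * (D / (2 * (c + 1))) < D := by
        calc c * (D / (2 * (c + 1))) = (c / (2 * (c + 1))) * D := by ring
          _ < 1 * D := mul_lt_mul_of_pos_right h4 hcon
          _ = D := one_mul D
      linarith
    linarith
  -- Convexity bound
  have hd : Fb - y = g + (Fb - Fa) := by rw [hg]; module
  have hsq : (Fb - y) ⬝ᵥ (Fb - y) =
      g ⬝ᵥ g + 2 * (g ⬝ᵥ (Fb - Fa)) + (Fb - Fa) ⬝ᵥ (Fb - Fa) := by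
    rw [hd]
    simp only [dotProduct_add, add_dotProduct, dotProduct_sub,
      sub_dotProduct]
    rw [dotProduct_comm Fb g, dotProduct_comm Fa g]
    ring
  have hdd : 0 ≤ (Fb - Fa) ⬝ᵥ (Fb - Fa) := Finset.sum_nonneg fun i _ => mul_self_nonneg _
  have conv : L α - L β ≤ lam * (A - B) - (g ⬝ᵥ (Fb - Fa)) / N := by
    have hLb : L β = lam * B + (1 / (2 * N)) * ((Fb - y) ⬝ᵥ (Fb - y)) := hL β
    have e : (g ⬝ᵥ (Fb - Fa)) / ↑N = 1 / (2 * ↑N) * (2 * (g ⬝ᵥ (Fb - Fa))) := by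
      field_simp
    have hY : 0 ≤ 1 / (2 * ↑N) * ((Fb - Fa) ⬝ᵥ (Fb - Fa)) := by positivity
    rw [hLa, hLb, hsq, e]
    nlinarith [hY]
  -- split g ⬝ᵥ Fb
  have hsplit : g ⬝ᵥ Fb = ∑ j, g ⬝ᵥ (K j *ᵥ β j) := by
    rw [hFb]
    simp only [dotProduct, Finset.sum_apply, Finset.mul_sum]
    exact Finset.sum_comm
  -- the max term
  set M : ℝ := max 0 ((Finset.univ.sup' (Finset.univ_nonempty_iff.mpr ⟨⟨0, hm⟩⟩)
      fun j => Real.sqrt (g ⬝ᵥ (K j *ᵥ g)) / N) - lam) with hM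
  have hM0 : 0 ≤ M := le_max_left _ _
  have hMj : ∀ j : Fin m, Real.sqrt (g ⬝ᵥ (K j *ᵥ g)) / N - lam ≤ M := by
    intro j
    refine le_trans ?_ (le_max_right _ _)
    apply sub_le_sub_right
    exact Finset.le_sup' (fun j => Real.sqrt (g ⬝ᵥ (K j *ᵥ g)) / ↑N) (Finset.mem_univ j)
  -- per-term bound
  have hterm : ∀ j : Fin m,
      -(lam * Real.sqrt (β j ⬝ᵥ (K j *ᵥ β j))) - (g ⬝ᵥ (K j *ᵥ β j)) / N ≤
        Real.sqrt (β j ⬝ᵥ (K j *ᵥ β j)) * M := by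
    intro j
    have hcs : -(g ⬝ᵥ (K j *ᵥ β j)) ≤
        Real.sqrt (g ⬝ᵥ (K j *ᵥ g)) * Real.sqrt (β j ⬝ᵥ (K j *ᵥ β j)) := by
      have := psd_cauchy_schwarz (hPSD j) g (-(β j))
      simpa [Matrix.mulVec_neg, dotProduct_neg, neg_dotProduct] using this
    have hb0 : 0 ≤ Real.sqrt (β j ⬝ᵥ (K j *ᵥ β j)) := Real.sqrt_nonneg _
    have h2 : -(g ⬝ᵥ (K j *ᵥ β j)) / ↑N ≤
        Real.sqrt (g ⬝ᵥ (K j *ᵥ g)) * Real.sqrt (β j ⬝ᵥ (K j *ᵥ β j)) / ↑N := by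
      gcongr
    have h3 : Real.sqrt (β j ⬝ᵥ (K j *ᵥ β j)) *
          (Real.sqrt (g ⬝ᵥ (K j *ᵥ g)) / ↑N - lam) =
        Real.sqrt (g ⬝ᵥ (K j *ᵥ g)) * Real.sqrt (β j ⬝ᵥ (K j *ᵥ β j)) / ↑N -
          lam * Real.sqrt (β j ⬝ᵥ (K j *ᵥ β j)) := by ring
    have h1 : -(lam * Real.sqrt (β j ⬝ᵥ (K j *ᵥ β j))) - (g ⬝ᵥ (K j *ᵥ β j)) / N ≤
        Real.sqrt (β j ⬝ᵥ (K j *ᵥ β j)) *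
          (Real.sqrt (g ⬝ᵥ (K j *ᵥ g)) / N - lam) := by
      rw [h3]
      have hneg : -(g ⬝ᵥ (K j *ᵥ β j)) / ↑N = -((g ⬝ᵥ (K j *ᵥ β j)) / ↑N) := by ring
      linarith [h2, hneg ▸ h2]
    exact h1.trans (mul_le_mul_of_nonneg_left (hMj j) hb0)
  -- put it together
  have main : L α - L β ≤ ∑ j, Real.sqrt (β j ⬝ᵥ (K j *ᵥ β j)) * M := by
    calc L α - L β ≤ lam * (A - B) - (g ⬝ᵥ (Fb - Fa)) / N := conv
      _ = (lam * A + P / N) + (- (lam * B) - (g ⬝ᵥ Fb) / N) := by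
          rw [dotProduct_sub, hPdef]
          ring
      _ ≤ - (lam * B) - (g ⬝ᵥ Fb) / N := by linarith [hstat]
      _ = ∑ j, (-(lam * Real.sqrt (β j ⬝ᵥ (K j *ᵥ β j))) - (g ⬝ᵥ (K j *ᵥ β j)) / N) := by
          rw [hsplit, hBdef, Finset.mul_sum, Finset.sum_div, ← Finset.sum_neg_distrib,
            ← Finset.sum_sub_distrib]
      _ ≤ ∑ j, Real.sqrt (β j ⬝ᵥ (K j *ᵥ β j)) * M :=
          Finset.sum_le_sum fun j _ => hterm j
  calc L α - L β ≤ ∑ j, Real.sqrt (β j ⬝ᵥ (K j *ᵥ β j)) * M := main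
    _ = B * M := by rw [hBdef, Finset.sum_mul]
end

section
/- Let α be any tuple supported on S ⊆ {1,…,m} with residual g = g(α), and let j* ∈ argmax_{j∈[m]} gᵀ K_j g with gᵀ K_{j*} g > 0. Then there exists a tuple α' supported on S ∪ {j*} such that L(α') ≤ L(α) − (1/2)·max(0, √(gᵀ K_{j*} g)/N − λ)². (This is the per-iteration progress bound L(f^{k+1}) ≤ L(f^k) − (1/2)[max_j ‖∇_j E_N(f^k)‖ − λ]_+² used in the proof of Theorem 1.) -/
open Matrix Finset

lemma dot_cs {N : ℕ} (u v : Fin N → ℝ) :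
    u ⬝ᵥ v ≤ Real.sqrt (u ⬝ᵥ u) * Real.sqrt (v ⬝ᵥ v) := by
  have h := Real.sum_mul_le_sqrt_mul_sqrt Finset.univ u v
  simpa [dotProduct, pow_two] using h

lemma dot_self_nonneg_s3 {N : ℕ} (u : Fin N → ℝ) : 0 ≤ u ⬝ᵥ u := by
  apply Finset.sum_nonneg; intro i _; exact mul_self_nonneg _

lemma sqrt_dot_triangle {N : ℕ} (u v : Fin N → ℝ) :
    Real.sqrt ((u + v) ⬝ᵥ (u + v)) ≤ Real.sqrt (u ⬝ᵥ u) + Real.sqrt (v ⬝ᵥ v) := by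
  have h1 : (u + v) ⬝ᵥ (u + v) ≤ (Real.sqrt (u ⬝ᵥ u) + Real.sqrt (v ⬝ᵥ v))^2 := by
    have hcs := dot_cs u v
    have h2 : (u + v) ⬝ᵥ (u + v) = u ⬝ᵥ u + 2 * (u ⬝ᵥ v) + v ⬝ᵥ v := by
      simp [add_dotProduct, dotProduct_add, dotProduct_comm v u]; ring
    have hsu := Real.sq_sqrt (dot_self_nonneg_s3 u)
    have hsv := Real.sq_sqrt (dot_self_nonneg_s3 v)
    nlinarith
  calc Real.sqrt ((u + v) ⬝ᵥ (u + v)) ≤ Real.sqrt ((Real.sqrt (u ⬝ᵥ u) + Real.sqrt (v ⬝ᵥ v))^2) :=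
        Real.sqrt_le_sqrt h1
    _ = _ := Real.sqrt_sq (by positivity)

section
open scoped MatrixOrder Matrix.Norms.L2Operator

noncomputable def Matrix.PosSemidef.sqrt {N : ℕ} {K : Matrix (Fin N) (Fin N) ℝ}
    (_hK : K.PosSemidef) : Matrix (Fin N) (Fin N) ℝ := CFC.sqrt K

lemma Matrix.PosSemidef.posSemidef_sqrt {N : ℕ} {K : Matrix (Fin N) (Fin N) ℝ}
    (hK : K.PosSemidef) : hK.sqrt.PosSemidef :=
  Matrix.nonneg_iff_posSemidef.mp (CFC.sqrt_nonneg _)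

lemma Matrix.PosSemidef.sqrt_mul_self {N : ℕ} {K : Matrix (Fin N) (Fin N) ℝ}
    (hK : K.PosSemidef) : hK.sqrt * hK.sqrt = K :=
  CFC.sqrt_mul_sqrt_self K (Matrix.nonneg_iff_posSemidef.mpr hK)

end

lemma psd_dot_eq {N : ℕ} {K : Matrix (Fin N) (Fin N) ℝ} (hK : K.PosSemidef) (a : Fin N → ℝ) :
    a ⬝ᵥ (K *ᵥ a) = (hK.sqrt *ᵥ a) ⬝ᵥ (hK.sqrt *ᵥ a) := by
  set R := hK.sqrt with hRdef
  have hsym : Rᵀ = R := by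
    have := hK.posSemidef_sqrt.1
    simpa [Matrix.IsHermitian, Matrix.conjTranspose_eq_transpose_of_trivial] using this
  have hK2 : R * R = K := hK.sqrt_mul_self
  calc a ⬝ᵥ (K *ᵥ a) = a ⬝ᵥ (R *ᵥ (R *ᵥ a)) := by rw [Matrix.mulVec_mulVec, hK2]
    _ = (a ᵥ* R) ⬝ᵥ (R *ᵥ a) := by rw [Matrix.dotProduct_mulVec]
    _ = (R *ᵥ a) ⬝ᵥ (R *ᵥ a) := by rw [← hsym, Matrix.mulVec_transpose, hsym]

lemma psd_dot_nonneg {N : ℕ} {K : Matrix (Fin N) (Fin N) ℝ} (hK : K.PosSemidef) (a : Fin N → ℝ) :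
    0 ≤ a ⬝ᵥ (K *ᵥ a) := by rw [psd_dot_eq hK]; exact dot_self_nonneg_s3 _

lemma psd_sqrt_triangle {N : ℕ} {K : Matrix (Fin N) (Fin N) ℝ} (hK : K.PosSemidef)
    (a b : Fin N → ℝ) :
    Real.sqrt ((a + b) ⬝ᵥ (K *ᵥ (a + b))) ≤
      Real.sqrt (a ⬝ᵥ (K *ᵥ a)) + Real.sqrt (b ⬝ᵥ (K *ᵥ b)) := by
  rw [psd_dot_eq hK, psd_dot_eq hK, psd_dot_eq hK, Matrix.mulVec_add]
  exact sqrt_dot_triangle _ _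

lemma mulVec_sq_le {N : ℕ} {R : Matrix (Fin N) (Fin N) ℝ} (w : Fin N → ℝ) :
    (R *ᵥ w) ⬝ᵥ (R *ᵥ w) ≤ (∑ i, ∑ j, (R i j)^2) * (w ⬝ᵥ w) := by
  have h : ∀ i : Fin N, ((R *ᵥ w) i)^2 ≤ (∑ j, (R i j)^2) * (w ⬝ᵥ w) := by
    intro i
    have := Finset.sum_mul_sq_le_sq_mul_sq Finset.univ (R i) w
    simpa [Matrix.mulVec, dotProduct, pow_two] using this
  calc (R *ᵥ w) ⬝ᵥ (R *ᵥ w) = ∑ i, ((R *ᵥ w) i)^2 := by simp [dotProduct, pow_two]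
    _ ≤ ∑ i : Fin N, (∑ j, (R i j)^2) * (w ⬝ᵥ w) := Finset.sum_le_sum (fun i _ => h i)
    _ = _ := by rw [← Finset.sum_mul]

lemma K_sq_bound {N : ℕ} {K : Matrix (Fin N) (Fin N) ℝ} (hK : K.PosSemidef)
    (hdiag : ∀ i, K i i ≤ 1) (g : Fin N → ℝ) :
    (K *ᵥ g) ⬝ᵥ (K *ᵥ g) ≤ (N : ℝ) * (g ⬝ᵥ (K *ᵥ g)) := by
  set R := hK.sqrt with hRdef
  have hsym : Rᵀ = R := by
    have := hK.posSemidef_sqrt.1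
    simpa [Matrix.IsHermitian, Matrix.conjTranspose_eq_transpose_of_trivial] using this
  have hK2 : R * R = K := hK.sqrt_mul_self
  have hKg : K *ᵥ g = R *ᵥ (R *ᵥ g) := by rw [Matrix.mulVec_mulVec, hK2]
  have htr : (∑ i, ∑ j, (R i j)^2) ≤ (N : ℝ) := by
    have heach : ∀ i : Fin N, ∑ j, (R i j)^2 = K i i := by
      intro i
      have : K i i = ∑ j, R i j * R j i := by rw [← hK2]; simp [Matrix.mul_apply]
      rw [this]
      apply Finset.sum_congr rfl
      intro j _
      have : R j i = R i j := by conv_lhs => rw [← hsym, Matrix.transpose_apply]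
      rw [this, pow_two]
    calc (∑ i, ∑ j, (R i j)^2) = ∑ i, K i i := by simp_rw [heach]
      _ ≤ ∑ _i : Fin N, (1:ℝ) := Finset.sum_le_sum (fun i _ => hdiag i)
      _ = N := by simp
  have hw := mulVec_sq_le (R := R) (R *ᵥ g)
  have hwg : (R *ᵥ g) ⬝ᵥ (R *ᵥ g) = g ⬝ᵥ (K *ᵥ g) := (psd_dot_eq hK g).symm
  have hwnn : 0 ≤ (R *ᵥ g) ⬝ᵥ (R *ᵥ g) := dot_self_nonneg_s3 _
  calc (K *ᵥ g) ⬝ᵥ (K *ᵥ g) = (R *ᵥ (R *ᵥ g)) ⬝ᵥ (R *ᵥ (R *ᵥ g)) := by rw [hKg]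
    _ ≤ (∑ i, ∑ j, (R i j)^2) * ((R *ᵥ g) ⬝ᵥ (R *ᵥ g)) := hw
    _ ≤ (N : ℝ) * ((R *ᵥ g) ⬝ᵥ (R *ᵥ g)) := mul_le_mul_of_nonneg_right htr hwnn
    _ = (N : ℝ) * (g ⬝ᵥ (K *ᵥ g)) := by rw [hwg]

/-- Per-iteration progress bound used in the proof of Theorem 1: adding the
kernel `j*` with the largest gradient yields a tuple `α'` supported on
`S ∪ {j*}` with `L(α') ≤ L(α) − (1/2)[‖∇_{j*} E_N‖ − λ]_+²`. -/
theorem stmt_3 (N m : ℕ) (hN : 1 ≤ N) (hm : 1 ≤ m)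
    (y : Fin N → ℝ) (lam : ℝ) (hlam : 0 < lam)
    (K : Fin m → Matrix (Fin N) (Fin N) ℝ)
    (hPSD : ∀ j, (K j).PosSemidef)
    (hdiag : ∀ j i, K j i i ≤ 1)
    (L : (Fin m → Fin N → ℝ) → ℝ)
    (hL : ∀ α : Fin m → Fin N → ℝ, L α =
      lam * ∑ j, Real.sqrt (α j ⬝ᵥ (K j *ᵥ α j)) +
      (1 / (2 * N)) * ((∑ j, K j *ᵥ α j - y) ⬝ᵥ (∑ j, K j *ᵥ α j - y)))
    (S : Finset (Fin m)) (α : Fin m → Fin N → ℝ)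
    (hsupp : ∀ j ∉ S, α j = 0)
    (g : Fin N → ℝ) (hg : g = ∑ j, K j *ᵥ α j - y)
    (jstar : Fin m)
    (hjmax : ∀ j, g ⬝ᵥ (K j *ᵥ g) ≤ g ⬝ᵥ (K jstar *ᵥ g))
    (hpos : 0 < g ⬝ᵥ (K jstar *ᵥ g)) :
    ∃ α' : Fin m → Fin N → ℝ, (∀ j ∉ insert jstar S, α' j = 0) ∧
      L α' ≤ L α - (1/2) * (max 0 (Real.sqrt (g ⬝ᵥ (K jstar *ᵥ g)) / N - lam))^2 := by
  have hNpos : (0:ℝ) < N := by exact_mod_cast hN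
  set Kj := K jstar with hKjdef
  set G := g ⬝ᵥ (Kj *ᵥ g) with hGdef
  have hGpos : 0 < G := hpos
  set sG := Real.sqrt G with hsGdef
  have hsGpos : 0 < sG := Real.sqrt_pos.mpr hGpos
  have hG2 : sG^2 = G := Real.sq_sqrt hGpos.le
  set c := max 0 (sG / N - lam) with hcdef
  have hcnn : 0 ≤ c := le_max_left _ _
  set t := c / sG with htdef
  have htnn : 0 ≤ t := div_nonneg hcnn hsGpos.le
  have htsG : t * sG = c := div_mul_cancel₀ c hsGpos.ne'
  set α' := Function.update α jstar (α jstar - t • g) with hα'def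
  refine ⟨α', ?_, ?_⟩
  · intro j hj
    rw [Finset.mem_insert] at hj
    push_neg at hj
    rw [hα'def, Function.update_of_ne hj.1]
    exact hsupp j hj.2
  -- sum of kernel expansions
  have hsum : ∑ j, K j *ᵥ α' j = (∑ j, K j *ᵥ α j) - t • (Kj *ᵥ g) := by
    have h1 : ∑ j, (K j *ᵥ α' j - K j *ᵥ α j) = -(t • (Kj *ᵥ g)) := by
      rw [Finset.sum_eq_single jstar]
      · rw [hα'def, Function.update_self, Matrix.mulVec_sub, Matrix.mulVec_smul]
        abel
      · intro j _ hne; rw [hα'def, Function.update_of_ne hne]; abel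
      · intro h; exact absurd (Finset.mem_univ jstar) h
    calc ∑ j, K j *ᵥ α' j = ∑ j, (K j *ᵥ α j + (K j *ᵥ α' j - K j *ᵥ α j)) := by
          apply Finset.sum_congr rfl; intro j _; abel
      _ = (∑ j, K j *ᵥ α j) + ∑ j, (K j *ᵥ α' j - K j *ᵥ α j) := Finset.sum_add_distrib
      _ = _ := by rw [h1]; abel
  -- regularizer bound
  have hregdiff : ∑ j, Real.sqrt (α' j ⬝ᵥ (K j *ᵥ α' j)) ≤
      (∑ j, Real.sqrt (α j ⬝ᵥ (K j *ᵥ α j))) + c := by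
    have hstep : Real.sqrt (α' jstar ⬝ᵥ (Kj *ᵥ α' jstar)) ≤
        Real.sqrt (α jstar ⬝ᵥ (Kj *ᵥ α jstar)) + c := by
      have heq : α' jstar = α jstar + (-(t • g)) := by
        rw [hα'def, Function.update_self]; abel
      have h2 := psd_sqrt_triangle (hPSD jstar) (α jstar) (-(t • g))
      have h3 : (-(t • g)) ⬝ᵥ (Kj *ᵥ (-(t • g))) = t^2 * G := by
        rw [hGdef, Matrix.mulVec_neg, Matrix.mulVec_smul, neg_dotProduct, dotProduct_neg,
          neg_neg, smul_dotProduct, dotProduct_smul, smul_eq_mul, smul_eq_mul, pow_two]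
        ring
      rw [h3] at h2
      have h4 : Real.sqrt (t^2 * G) = c := by
        rw [Real.sqrt_mul (sq_nonneg t), Real.sqrt_sq htnn, ← hsGdef, htsG]
      rw [heq]
      calc Real.sqrt ((α jstar + (-(t • g))) ⬝ᵥ (Kj *ᵥ (α jstar + (-(t • g))))) ≤
            Real.sqrt (α jstar ⬝ᵥ (Kj *ᵥ α jstar)) + Real.sqrt (t^2 * G) := h2
        _ = Real.sqrt (α jstar ⬝ᵥ (Kj *ᵥ α jstar)) + c := by rw [h4]
    have hdiff : ∑ j, (Real.sqrt (α' j ⬝ᵥ (K j *ᵥ α' j)) - Real.sqrt (α j ⬝ᵥ (K j *ᵥ α j)))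
        = Real.sqrt (α' jstar ⬝ᵥ (Kj *ᵥ α' jstar)) - Real.sqrt (α jstar ⬝ᵥ (Kj *ᵥ α jstar)) := by
      rw [Finset.sum_eq_single jstar]
      · intro j _ hne; rw [hα'def, Function.update_of_ne hne]; ring
      · intro h; exact absurd (Finset.mem_univ jstar) h
    have := Finset.sum_sub_distrib (f := fun j => Real.sqrt (α' j ⬝ᵥ (K j *ᵥ α' j)))
      (g := fun j => Real.sqrt (α j ⬝ᵥ (K j *ᵥ α j))) (s := Finset.univ)
    rw [this] at hdiff
    linarith
  -- new residual
  have hres : ∑ j, K j *ᵥ α' j - y = g - t • (Kj *ᵥ g) := by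
    rw [hsum, hg]; abel
  -- loss expansion
  set v := Kj *ᵥ g with hvdef
  have hgg : (g - t • v) ⬝ᵥ (g - t • v) = g ⬝ᵥ g - 2 * t * G + t^2 * (v ⬝ᵥ v) := by
    rw [hGdef]
    simp [sub_dotProduct, dotProduct_sub, smul_dotProduct, dotProduct_smul, smul_smul,
      dotProduct_comm v g]
    ring
  have hQ : v ⬝ᵥ v ≤ (N : ℝ) * G := by
    rw [hvdef, hGdef]
    exact K_sq_bound (hPSD jstar) (hdiag jstar) g
  have htG : t * G = c * sG := by
    rw [htdef, ← hG2]; field_simp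
  have ht2G : t^2 * ((N:ℝ) * G) = (N:ℝ) * c^2 := by
    rw [htdef, ← hG2]; field_simp
  have hggle : (g - t • v) ⬝ᵥ (g - t • v) ≤ g ⬝ᵥ g - 2 * (c * sG) + (N:ℝ) * c^2 := by
    have h5 : t^2 * (v ⬝ᵥ v) ≤ t^2 * ((N:ℝ) * G) :=
      mul_le_mul_of_nonneg_left hQ (sq_nonneg t)
    rw [hgg]
    rw [ht2G] at h5
    linarith [htG, h5]
  -- key scalar inequality
  have hkey : lam * c + c^2 ≤ c * sG / N := by
    rcases le_or_gt (sG / N - lam) 0 with h | h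
    · have hc0 : c = 0 := max_eq_left h
      simp [hc0]
    · have hceq : c = sG / N - lam := max_eq_right h.le
      rw [hceq]
      have : (sG / N - lam) * sG / N = (sG/N - lam) * (sG/N) := by ring
      rw [this]
      ring_nf
      nlinarith [hNpos]
  -- assemble
  have hLα : L α = lam * (∑ j, Real.sqrt (α j ⬝ᵥ (K j *ᵥ α j))) + (1/(2*N)) * (g ⬝ᵥ g) := by
    rw [hL, ← hg]
  have hLα' : L α' = lam * (∑ j, Real.sqrt (α' j ⬝ᵥ (K j *ᵥ α' j))) +
      (1/(2*N)) * ((g - t • v) ⬝ᵥ (g - t • v)) := by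
    rw [hL, hres, hvdef]
  rw [hLα, hLα']
  have h2N : (0:ℝ) < 1/(2*N) := by positivity
  have hloss := mul_le_mul_of_nonneg_left hggle h2N.le
  have hreg' := mul_le_mul_of_nonneg_left hregdiff hlam.le
  have hexp : (1/(2*(N:ℝ))) * (g ⬝ᵥ g - 2 * (c * sG) + (N:ℝ) * c^2) =
      (1/(2*N)) * (g ⬝ᵥ g) - c * sG / N + c^2/2 := by
    field_simp
  rw [hexp] at hloss
  nlinarith [hkey, hloss, hreg']
end

section
/- Let ε > 0, γ > 0, and d ∈ ℕ with d ≥ 16γ·ln(1/(12ε)). If a real number E satisfies E ≤ max(μ·ε, (1/2)·(max(0, 1 − (μ−1)²/(8μ(μ+1)γ)))^d) for every μ ≥ 1, then E ≤ 6ε. (This is the purely numeric reduction carried out in the proof of Theorem 2, deriving the explicit bound 6ε* from the dichotomy of Lemma 4.) -/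
/-- Numeric reduction in the proof of Theorem 2: if
`d ≥ 16 γ ln(1/(12 ε))` and `E ≤ max(μ ε, (1/2)(max(0, 1 − (μ−1)²/(8μ(μ+1)γ)))^d)`
for every `μ ≥ 1`, then `E ≤ 6 ε`. -/
theorem stmt_7 (ε γ : ℝ) (hε : 0 < ε) (hγ : 0 < γ) (d : ℕ)
    (hd : 16 * γ * Real.log (1 / (12 * ε)) ≤ (d : ℝ))
    (E : ℝ)
    (hE : ∀ μ : ℝ, 1 ≤ μ →
      E ≤ max (μ * ε) ((1/2) * (max 0 (1 - (μ - 1)^2 / (8 * μ * (μ + 1) * γ)))^d)) :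
    E ≤ 6 * ε := by
  rcases le_or_gt (1/12 : ℝ) ε with h | h
  · -- large ε : use μ = 1
    have h1 := hE 1 le_rfl
    have : max 0 (1 - ((1:ℝ) - 1)^2 / (8 * 1 * (1 + 1) * γ)) = 1 := by
      norm_num
    rw [this] at h1
    simp only [one_pow, one_mul, mul_one] at h1
    have : max ε (1/2 : ℝ) ≤ 6 * ε := by
      apply max_le <;> linarith
    linarith [le_trans h1 this]
  · -- small ε : use μ = 5
    have h5 := hE 5 (by norm_num)
    set L := Real.log (1 / (12 * ε)) with hLdef
    have hL : 0 < L := Real.log_pos (by rw [one_lt_div (by positivity)]; linarith)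
    set c : ℝ := ((5:ℝ) - 1)^2 / (8 * 5 * (5 + 1) * γ) with hcdef
    have hc : c = 16 / (240 * γ) := by rw [hcdef]; norm_num
    have hcpos : 0 < c := by rw [hc]; positivity
    have hmax : max 0 (1 - c) ≤ Real.exp (-c) := by
      apply max_le (Real.exp_pos _).le
      linarith [Real.add_one_le_exp (-c)]
    have hpow : (max 0 (1 - c))^d ≤ Real.exp (-(c * d)) := by
      calc (max 0 (1 - c))^d ≤ (Real.exp (-c))^d :=
            pow_le_pow_left₀ (le_max_left _ _) hmax d
        _ = Real.exp (-(c * d)) := by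
            rw [← Real.exp_nat_mul]; ring_nf
    have hcd : L ≤ c * d := by
      rw [hc]
      have : 16 * γ * L ≤ (d : ℝ) := hd
      have h15 : 16 / (240 * γ) * (16 * γ * L) = (16/15) * L := by
        field_simp; ring
      have hstep : 16 / (240 * γ) * (16 * γ * L) ≤ 16 / (240 * γ) * d := by
        apply mul_le_mul_of_nonneg_left this (by positivity)
      rw [h15] at hstep
      linarith
    have hexp : Real.exp (-(c * d)) ≤ 12 * ε := by
      have : Real.exp (-(c * d)) ≤ Real.exp (-L) := by
        apply Real.exp_le_exp.mpr; linarith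
      have hEL : Real.exp (-L) = 12 * ε := by
        rw [Real.exp_neg, hLdef, Real.exp_log (by positivity), one_div, inv_inv]
      linarith
    have hterm : (1/2 : ℝ) * (max 0 (1 - c))^d ≤ 6 * ε := by nlinarith
    have hmu : (5:ℝ) * ε ≤ 6 * ε := by linarith
    calc E ≤ max ((5:ℝ) * ε) ((1/2) * (max 0 (1 - c))^d) := h5
      _ ≤ 6 * ε := max_le hmu hterm
end

section
/- The iterates of Algorithm 2 satisfy Σ_{k=1}^d √((g^{k−1})ᵀ K̂_{j_k} g^{k−1} / N) ≤ √d · ‖y‖₂/√N ≤ √d. (In RKHS terms this is the bound ‖f‖ = Σ_{k=1}^d ‖f_{j_k}‖_{ℋ_{j_k}} ≤ √(2d·E_N(f^0)) ≤ √(d/N)·‖y‖₂ ≤ √d established in the proof of Theorem 3, showing the learned sparse combination lies in the ball ℋ(√d).) -/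
open Matrix Finset

open scoped MatrixOrder in
private lemma key_quad {N : ℕ} (K : Matrix (Fin N) (Fin N) ℝ)
    (hK : K.PosSemidef) (hK1 : (1 - K).PosSemidef) (g : Fin N → ℝ) :
    (K *ᵥ g) ⬝ᵥ (K *ᵥ g) ≤ g ⬝ᵥ (K *ᵥ g) := by
  -- K - K² = S (1-K) S with S = sqrt K, hence PSD
  set S := CFC.sqrt K with hS
  have hSh : Sᴴ = S := (Matrix.nonneg_iff_posSemidef.mp (CFC.sqrt_nonneg K)).1
  have hPSD : (Sᴴ * (1 - K) * S).PosSemidef := hK1.conjTranspose_mul_mul_same S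
  have hEq : Sᴴ * (1 - K) * S = K - K * K := by
    rw [hSh]
    have h1 : S * S = K := CFC.sqrt_mul_sqrt_self K (Matrix.nonneg_iff_posSemidef.mpr hK)
    have h4 : S * K * S = K * K := by rw [← h1]; simp only [mul_assoc]
    rw [mul_sub, mul_one, sub_mul, h1, h4]
  have h2 := hPSD.dotProduct_mulVec_nonneg g
  rw [hEq] at h2
  have hstar : star g = g := rfl
  rw [hstar, sub_mulVec, dotProduct_sub] at h2
  have hKT : Kᵀ = K := by
    rw [← conjTranspose_eq_transpose_of_trivial]; exact hK.1
  have h3 : g ⬝ᵥ (K * K) *ᵥ g = (K *ᵥ g) ⬝ᵥ (K *ᵥ g) := by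
    rw [← mulVec_mulVec, dotProduct_mulVec, ← hKT, vecMul_transpose, hKT]
  linarith [h2, h3.symm]

/-- Norm bound from the proof of Theorem 3: the RKHS norms of the kernel
classifiers added by Algorithm 2 satisfy
`Σ_{k=1}^d √((g^{k−1})ᵀ K̂_{j_k} g^{k−1}/N) ≤ √d ‖y‖₂/√N ≤ √d`. -/
theorem stmt_18 (N m d : ℕ) (hN : 1 ≤ N) (hm : 1 ≤ m) (hd : 1 ≤ d)
    (y : Fin N → ℝ) (hy : y ⬝ᵥ y ≤ (N : ℝ))
    (Khat : Fin m → Matrix (Fin N) (Fin N) ℝ)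
    (hPSD : ∀ j, (Khat j).PosSemidef)
    (hle1 : ∀ j, (1 - Khat j).PosSemidef)
    (u : ℕ → Fin N → ℝ) (jsel : ℕ → Fin m)
    (hu0 : u 0 = 0)
    (hjmax : ∀ k < d, ∀ j : Fin m,
      (Khat j *ᵥ (u k - y)) ⬝ᵥ (Khat j *ᵥ (u k - y)) ≤
        (Khat (jsel k) *ᵥ (u k - y)) ⬝ᵥ (Khat (jsel k) *ᵥ (u k - y)))
    (hustep : ∀ k < d, u (k + 1) = u k - Khat (jsel k) *ᵥ (u k - y)) :
    (∑ k ∈ Finset.range d,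
        Real.sqrt (((u k - y) ⬝ᵥ (Khat (jsel k) *ᵥ (u k - y))) / N)) ≤
      Real.sqrt d * Real.sqrt (y ⬝ᵥ y) / Real.sqrt N ∧
    (∑ k ∈ Finset.range d,
        Real.sqrt (((u k - y) ⬝ᵥ (Khat (jsel k) *ᵥ (u k - y))) / N)) ≤
      Real.sqrt d := by
  set g : ℕ → Fin N → ℝ := fun k => u k - y with hg
  set q : ℕ → ℝ := fun k => g k ⬝ᵥ (Khat (jsel k) *ᵥ g k) with hq
  have hqnn : ∀ k, 0 ≤ q k := fun k => (hPSD (jsel k)).dotProduct_mulVec_nonneg (g k)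
  set E : ℕ → ℝ := fun k => g k ⬝ᵥ g k with hE
  have hEnn : ∀ k, 0 ≤ E k := fun k => Finset.sum_nonneg fun i _ => mul_self_nonneg _
  -- energy decay
  have hdecay : ∀ k < d, q k + E (k + 1) ≤ E k := by
    intro k hk
    have hstep : g (k + 1) = g k - Khat (jsel k) *ᵥ g k := by
      simp only [hg, hustep k hk]; abel
    have hquad := key_quad (Khat (jsel k)) (hPSD (jsel k)) (hle1 (jsel k)) (g k)
    have hexp : E (k + 1) = E k - 2 * q k +
        (Khat (jsel k) *ᵥ g k) ⬝ᵥ (Khat (jsel k) *ᵥ g k) := by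
      have hcomm : (Khat (jsel k) *ᵥ g k) ⬝ᵥ g k = q k := dotProduct_comm _ _
      simp only [hE, hstep, dotProduct_sub, sub_dotProduct, hcomm]
      simp only [hq]
      ring
    rw [hexp]
    nlinarith [hquad]
  -- telescoping sum
  have htel : ∀ n ≤ d, (∑ k ∈ Finset.range n, q k) + E n ≤ E 0 := by
    intro n hn
    induction n with
    | zero => simp
    | succ p ih =>
      have hp : p < d := hn
      have := hdecay p hp
      have := ih (Nat.le_of_succ_le hn)
      rw [Finset.sum_range_succ]
      linarith
  have hE0 : E 0 = y ⬝ᵥ y := by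
    simp [hE, hg, hu0, dotProduct_neg, neg_dotProduct]
  have hsumq : (∑ k ∈ Finset.range d, q k) ≤ y ⬝ᵥ y := by
    have h0 := htel d le_rfl
    rw [hE0] at h0
    linarith [hEnn d]
  have hNpos : (0:ℝ) < N := by exact_mod_cast hN
  -- Cauchy-Schwarz
  set s := ∑ k ∈ Finset.range d, Real.sqrt (q k / N) with hs
  have hsnn : 0 ≤ s := Finset.sum_nonneg fun k _ => Real.sqrt_nonneg _
  have hcs : s ^ 2 ≤ d * ((y ⬝ᵥ y) / N) := by
    have h1 : s ^ 2 ≤ (Finset.range d).card * ∑ k ∈ Finset.range d,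
        Real.sqrt (q k / N) ^ 2 := sq_sum_le_card_mul_sum_sq
    have h2 : ∑ k ∈ Finset.range d, Real.sqrt (q k / N) ^ 2 =
        (∑ k ∈ Finset.range d, q k) / N := by
      rw [Finset.sum_div]
      refine Finset.sum_congr rfl fun k _ => ?_
      rw [Real.sq_sqrt (div_nonneg (hqnn k) hNpos.le)]
    rw [Finset.card_range] at h1
    calc s ^ 2 ≤ d * ((∑ k ∈ Finset.range d, q k) / N) := by rw [← h2]; exact h1
      _ ≤ d * ((y ⬝ᵥ y) / N) := by gcongr
  have hmain : s ≤ Real.sqrt d * Real.sqrt (y ⬝ᵥ y) / Real.sqrt N := by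
    have h3 : s ≤ Real.sqrt (d * ((y ⬝ᵥ y) / N)) := by
      rw [← Real.sqrt_sq hsnn]
      exact Real.sqrt_le_sqrt hcs
    calc s ≤ Real.sqrt (d * ((y ⬝ᵥ y) / N)) := h3
      _ = Real.sqrt d * Real.sqrt (y ⬝ᵥ y) / Real.sqrt N := by
          rw [Real.sqrt_mul (Nat.cast_nonneg d),
            Real.sqrt_div (show (0:ℝ) ≤ y ⬝ᵥ y from
              Finset.sum_nonneg fun i _ => mul_self_nonneg (y i)),
            mul_div_assoc]
  refine ⟨hmain, hmain.trans ?_⟩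
  have hyN : Real.sqrt (y ⬝ᵥ y) ≤ Real.sqrt N := Real.sqrt_le_sqrt hy
  rw [div_le_iff₀ (Real.sqrt_pos.mpr hNpos)]
  calc Real.sqrt d * Real.sqrt (y ⬝ᵥ y) ≤ Real.sqrt d * Real.sqrt N :=
        mul_le_mul_of_nonneg_left hyN (Real.sqrt_nonneg _)
    _ = Real.sqrt d * Real.sqrt N := rfl
end
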